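/- arXiv:math/0612172 — 3 statements merged into one kernel-verified Lean document; each statement's English description precedes it below -/
import Mathlib

section
/- The set ℋ_∞ = {a ∈ ℂ : f_a^n(-a) → ∞} is a connected open subset of ℂ. -/
/-!
Outside the disc of radius `3|a| + 4` the map `f_a` at least doubles the modulus, so `a` escapes
as soon as one iterate of the critical value `-a` leaves that disc; this open condition makes
`ℋ_∞` open, and since `|f_a(-a)| = |a|^d / (d - 1)` every parameter with `|a| > d + 4` escapes.
A bounded component `U` of `ℋ_∞` would have its frontier outside `ℋ_∞`, where the critical orbit
stays in a fixed disc; by the maximum modulus principle applied to `a ↦ f_a^n(-a)` the orbits over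
`U` would then be bounded too. So every component meets the connected region `|a| > d + 4`.
-/

noncomputable def fpoly (d : ℕ) (a : ℂ) (z : ℂ) : ℂ :=
  z ^ (d - 1) * (z + (d : ℂ) * a / ((d : ℂ) - 1))

/-- The escape locus `ℋ_∞`: parameters whose critical orbit tends to infinity. -/
def Hinf (d : ℕ) : Set ℂ :=
  {a : ℂ | Filter.Tendsto (fun n : ℕ => ‖(fpoly d a)^[n] (-a)‖)
    Filter.atTop Filter.atTop}

open Filter Metric Set Bornology

section Topology

variable {X : Type*} [TopologicalSpace X]

theorem disjoint_frontier_connectedComponentIn [LocallyConnectedSpace X] {S : Set X}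
    (hS : IsOpen S) (x : X) : Disjoint (frontier (connectedComponentIn S x)) S := by
  refine Set.disjoint_left.mpr fun y hyU hyS => ?_
  have hy : y ∈ connectedComponentIn S y := mem_connectedComponentIn hyS
  obtain ⟨z, hzy, hzU⟩ := mem_closure_iff.mp (frontier_subset_closure hyU) _
    hS.connectedComponentIn hy
  have hUy : connectedComponentIn S x = connectedComponentIn S y :=
    (connectedComponentIn_eq hzU).trans (connectedComponentIn_eq hzy).symm
  rw [hS.connectedComponentIn.frontier_eq, hUy] at hyU
  exact hyU.2 hy

theorem isConnected_of_forall_connectedComponentIn_meets {S E : Set X} (hE : IsConnected E)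
    (hES : E ⊆ S) (h : ∀ y ∈ S, (connectedComponentIn S y ∩ E).Nonempty) : IsConnected S := by
  obtain ⟨x, hx⟩ := hE.nonempty
  refine ⟨⟨x, hES hx⟩, isPreconnected_of_forall x fun y hy => ⟨connectedComponentIn S y,
    connectedComponentIn_subset S y, ?_, mem_connectedComponentIn hy,
    isPreconnected_connectedComponentIn⟩⟩
  obtain ⟨z, hzy, hzE⟩ := h y hy
  rw [connectedComponentIn_eq hzy]
  exact hE.isPreconnected.subset_connectedComponentIn hzE hES hx

end Topology

theorem Complex.isConnected_setOf_lt_norm {ρ : ℝ} (hρ : 0 < ρ) :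
    IsConnected {a : ℂ | ρ < ‖a‖} := by
  have himage : Complex.exp '' {w : ℂ | Real.log ρ < w.re} = {a : ℂ | ρ < ‖a‖} := by
    ext a
    constructor
    · rintro ⟨w, hw, rfl⟩
      rw [Set.mem_ofPred_eq, Complex.norm_exp]
      exact (Real.log_lt_iff_lt_exp hρ).mp hw
    · intro ha
      have ha0 : a ≠ 0 := norm_pos_iff.mp (hρ.trans ha)
      refine ⟨Complex.log a, ?_, Complex.exp_log ha0⟩
      rw [Set.mem_ofPred_eq, Complex.log_re]
      exact Real.log_lt_log hρ ha
  rw [← himage]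
  exact ((convex_halfSpace_re_gt _).isConnected ⟨Real.log ρ + 1, by simp⟩).image _
    Complex.continuous_exp.continuousOn

theorem Complex.norm_natCast_sub_one {d : ℕ} (hd : 1 ≤ d) : ‖(d : ℂ) - 1‖ = (d : ℝ) - 1 := by
  have hcast : (d : ℂ) - 1 = ((d - 1 : ℕ) : ℂ) := by rw [Nat.cast_sub hd, Nat.cast_one]
  rw [hcast, Complex.norm_natCast, Nat.cast_sub hd, Nat.cast_one]

noncomputable def critOrbit (d n : ℕ) (a : ℂ) : ℂ := (fpoly d a)^[n] (-a)

theorem critOrbit_add (d m n : ℕ) (a : ℂ) :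
    critOrbit d (m + n) a = (fpoly d a)^[m] (critOrbit d n a) :=
  Function.iterate_add_apply _ _ _ _

theorem differentiable_critOrbit (d n : ℕ) : Differentiable ℂ (critOrbit d n) := by
  induction n with
  | zero => exact differentiable_neg
  | succ n ih =>
    have hsucc : critOrbit d (n + 1) = fun a => fpoly d a (critOrbit d n a) := by
      funext a
      exact Function.iterate_succ_apply' _ _ _
    rw [hsucc]
    unfold fpoly
    fun_prop

theorem mem_Hinf_iff_tendsto (d : ℕ) (a : ℂ) :
    a ∈ Hinf d ↔ Tendsto (fun n => ‖critOrbit d n a‖) atTop atTop := Iff.rfl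

section Escape

variable {d : ℕ}

theorem norm_fpoly_coeff_le (hd : 3 ≤ d) (a : ℂ) :
    ‖(d : ℂ) * a / ((d : ℂ) - 1)‖ ≤ 3 / 2 * ‖a‖ := by
  have hd3 : (3 : ℝ) ≤ d := by exact_mod_cast hd
  rw [norm_div, norm_mul, Complex.norm_natCast, Complex.norm_natCast_sub_one (by omega),
    div_le_iff₀ (by linarith)]
  nlinarith [norm_nonneg a]

theorem two_mul_norm_le_norm_fpoly (hd : 3 ≤ d) {a z : ℂ} (hz : 3 * ‖a‖ + 4 ≤ ‖z‖) :
    2 * ‖z‖ ≤ ‖fpoly d a z‖ := by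
  have hz4 : 4 ≤ ‖z‖ := by linarith [norm_nonneg a]
  have hlin : ‖z‖ / 2 ≤ ‖z + (d : ℂ) * a / ((d : ℂ) - 1)‖ := by
    have := norm_sub_norm_le z (-((d : ℂ) * a / ((d : ℂ) - 1)))
    rw [sub_neg_eq_add, norm_neg] at this
    linarith [norm_fpoly_coeff_le hd a]
  have hpow : ‖z‖ ^ 2 ≤ ‖z‖ ^ (d - 1) := pow_le_pow_right₀ (by linarith) (by omega)
  rw [fpoly, norm_mul, norm_pow]
  calc 2 * ‖z‖ ≤ ‖z‖ ^ 2 * (‖z‖ / 2) := by nlinarith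
    _ ≤ ‖z‖ ^ (d - 1) * ‖z + (d : ℂ) * a / ((d : ℂ) - 1)‖ := by gcongr

theorem pow_two_mul_norm_le_norm_iterate_fpoly (hd : 3 ≤ d) {a z : ℂ}
    (hz : 3 * ‖a‖ + 4 ≤ ‖z‖) (n : ℕ) : 2 ^ n * ‖z‖ ≤ ‖(fpoly d a)^[n] z‖ := by
  induction n with
  | zero => simp
  | succ n ih =>
    have hle : ‖z‖ ≤ 2 ^ n * ‖z‖ := le_mul_of_one_le_left (norm_nonneg z) (one_le_pow₀ one_le_two)
    rw [Function.iterate_succ_apply', pow_succ, mul_comm _ (2 : ℝ), mul_assoc]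
    exact (mul_le_mul_of_nonneg_left ih zero_le_two).trans
      (two_mul_norm_le_norm_fpoly hd (by linarith))

theorem tendsto_norm_iterate_fpoly (hd : 3 ≤ d) {a z : ℂ} (hz : 3 * ‖a‖ + 4 ≤ ‖z‖) :
    Tendsto (fun n => ‖(fpoly d a)^[n] z‖) atTop atTop :=
  tendsto_atTop_mono (pow_two_mul_norm_le_norm_iterate_fpoly hd hz)
    ((tendsto_pow_atTop_atTop_of_one_lt one_lt_two).atTop_mul_const
      (by linarith [norm_nonneg a]))

theorem mem_Hinf_iff_exists_lt_norm_critOrbit (hd : 3 ≤ d) (a : ℂ) :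
    a ∈ Hinf d ↔ ∃ n, 3 * ‖a‖ + 4 < ‖critOrbit d n a‖ := by
  rw [mem_Hinf_iff_tendsto]
  refine ⟨fun h => (h.eventually_gt_atTop _).exists, fun ⟨N, hN⟩ => ?_⟩
  rw [← tendsto_add_atTop_iff_nat N]
  simp only [critOrbit_add]
  exact tendsto_norm_iterate_fpoly hd hN.le

theorem isOpen_Hinf (hd : 3 ≤ d) : IsOpen (Hinf d) := by
  rw [show Hinf d = {a | ∃ n, 3 * ‖a‖ + 4 < ‖critOrbit d n a‖} from
    Set.ext (mem_Hinf_iff_exists_lt_norm_critOrbit hd), ofPred_exists]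
  exact isOpen_iUnion fun n => isOpen_lt (by fun_prop) (differentiable_critOrbit d n).continuous.norm

theorem norm_critOrbit_one (hd : 3 ≤ d) (a : ℂ) :
    ‖critOrbit d 1 a‖ = ‖a‖ ^ d / ((d : ℝ) - 1) := by
  have hd1 : (d : ℂ) - 1 ≠ 0 := by
    rw [sub_ne_zero]
    exact_mod_cast (by omega : d ≠ 1)
  have hcrit : critOrbit d 1 a = (-a) ^ (d - 1) * (a / ((d : ℂ) - 1)) := by
    simp only [critOrbit, Function.iterate_one, fpoly]
    congr 1
    field_simp
    ring
  rw [hcrit, norm_mul, norm_pow, norm_neg, norm_div, Complex.norm_natCast_sub_one (by omega),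
    ← mul_div_assoc, ← pow_succ, Nat.sub_add_cancel (by omega)]

theorem mem_Hinf_of_lt_norm (hd : 3 ≤ d) {a : ℂ} (ha : (d : ℝ) + 4 < ‖a‖) : a ∈ Hinf d := by
  have hd3 : (3 : ℝ) ≤ d := by exact_mod_cast hd
  refine (mem_Hinf_iff_exists_lt_norm_critOrbit hd a).mpr ⟨1, ?_⟩
  rw [norm_critOrbit_one hd, lt_div_iff₀ (by linarith)]
  have hcube : ‖a‖ ^ 3 ≤ ‖a‖ ^ d := pow_le_pow_right₀ (by linarith) hd
  have ha0 : 0 < ‖a‖ := by linarith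
  nlinarith [mul_lt_mul_of_pos_left ha (pow_pos ha0 2)]

end Escape

theorem not_isBounded_connectedComponentIn_Hinf {d : ℕ} (hd : 3 ≤ d) {b : ℂ} (hb : b ∈ Hinf d) :
    ¬IsBounded (connectedComponentIn (Hinf d) b) := by
  set U := connectedComponentIn (Hinf d) b
  intro hU
  obtain ⟨R, hUR⟩ := hU.subset_closedBall 0
  have horbit_frontier : ∀ n, ∀ x ∈ frontier U, ‖critOrbit d n x‖ ≤ 3 * R + 4 := by
    intro n x hx
    have hxR : ‖x‖ ≤ R := mem_closedBall_zero_iff.mp <|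
      closure_minimal hUR isClosed_closedBall (frontier_subset_closure hx)
    have hxH : x ∉ Hinf d :=
      Set.disjoint_left.mp (disjoint_frontier_connectedComponentIn (isOpen_Hinf hd) b) hx
    rw [mem_Hinf_iff_exists_lt_norm_critOrbit hd, not_exists] at hxH
    linarith [not_lt.mp (hxH n)]
  have horbit_b : ∀ n, ‖critOrbit d n b‖ ≤ 3 * R + 4 := fun n =>
    Complex.norm_le_of_forall_mem_frontier_norm_le hU (differentiable_critOrbit d n).diffContOnCl
      (horbit_frontier n) (subset_closure (mem_connectedComponentIn hb))
  obtain ⟨n, hn⟩ := ((mem_Hinf_iff_tendsto d b).mp hb |>.eventually_gt_atTop (3 * R + 4)).exists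
  exact (horbit_b n).not_gt hn

/-- `ℋ_∞` is a connected open subset of `ℂ`. -/
theorem stmt5 (d : ℕ) (hd : 3 ≤ d) :
    IsOpen (Hinf d) ∧ IsConnected (Hinf d) := by
  refine ⟨isOpen_Hinf hd, isConnected_of_forall_connectedComponentIn_meets
    (Complex.isConnected_setOf_lt_norm (by positivity)) (fun a => mem_Hinf_of_lt_norm hd)
    fun b hb => ?_⟩
  by_contra! hdisj
  refine not_isBounded_connectedComponentIn_Hinf hd hb <|
    (isBounded_closedBall (x := 0) (r := (d : ℝ) + 4)).subset fun a ha => ?_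
  rw [mem_closedBall_zero_iff]
  exact not_lt.mp fun hlt => hdisj.subset ⟨ha, hlt⟩
end

section
/- It is impossible that the critical value f_a(-a) lies in the immediate basin B_a of 0 while the critical point -a does not: if f_a(-a) ∈ B_a then -a ∈ B_a. -/
def basin (d : ℕ) (a : ℂ) : Set ℂ :=
  {z : ℂ | Filter.Tendsto (fun n : ℕ => (fpoly d a)^[n] z) Filter.atTop (nhds 0)}

def immBasin (d : ℕ) (a : ℂ) : Set ℂ := connectedComponentIn (basin d a) 0

/-!
Suppose `f_a(-a) ∈ B_a` but `-a ∉ B_a`. Then `-a` still lies in the basin, and since `B_a` is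
closed in the basin, `-a ∉ closure B_a`. Consider the set of `w` such that `w = 0` or `w` has
`d - 1` distinct preimages in `B_a`. Near `0` we have `f_a = g ^ (d - 1)` for a local coordinate
`g`, so this set contains a neighbourhood of `0`; at `w ≠ 0` the preimages in `B_a` are regular
points, so the set is open by the inverse function theorem; and it is closed in `B_a` because
`f_a` is proper and limits of such preimages lie in `closure B_a ∩ basin = B_a`, where they are
regular, hence stay distinct. So it contains the connected set `B_a`, and as `f_a(-a) ≠ 0`, the
polynomial `f_a - f_a(-a)` has the double root `-a` and `d - 1` further roots, too many for
degree `d`.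
-/

open Filter Set Topology Function Metric Polynomial
open scoped NNReal

section DistinctPreimages

variable {X Y : Type*}

def HasDistinctPreimages (f : X → Y) (s : Set X) (ι : Type*) (w : Y) : Prop :=
  ∃ z : ι → X, Injective z ∧ ∀ i, z i ∈ s ∧ f (z i) = w

variable {f : X → Y} {s t : Set X} {ι : Type*} {y : Y}

theorem HasDistinctPreimages.mono (h : HasDistinctPreimages f s ι y)
    (hst : s ∩ f ⁻¹' {y} ⊆ t) :
    HasDistinctPreimages f t ι y := by
  obtain ⟨z, hinj, hz⟩ := h
  exact ⟨z, hinj, fun i => ⟨hst (hz i), (hz i).2⟩⟩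

variable [TopologicalSpace X] [TopologicalSpace Y]

theorem HasDistinctPreimages.eventually [T2Space X] [Finite ι] (hy : HasDistinctPreimages f s ι y)
    (hs : IsOpen s) (hf : ∀ x ∈ s, f x = y → 𝓝 y ≤ map f (𝓝 x)) :
    ∀ᶠ w in 𝓝 y, HasDistinctPreimages f s ι w := by
  obtain ⟨x, hinj, hx⟩ := hy
  obtain ⟨U, hU, hdisj⟩ := (finite_range x).t2_separation
  have himage : ∀ i, f '' (U (x i) ∩ s) ∈ 𝓝 y := fun i =>
    hf _ (hx i).1 (hx i).2 <| image_mem_map <|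
      inter_mem ((hU _).2.mem_nhds (hU _).1) (hs.mem_nhds (hx i).1)
  filter_upwards [eventually_all.2 himage] with w hw
  choose z hzU hzw using hw
  refine ⟨z, fun i j hij => hinj.eq_iff.mp ?_, fun i => ⟨(hzU i).2, hzw i⟩⟩
  by_contra hne
  exact (hdisj (mem_range_self i) (mem_range_self j) hne).ne_of_mem (hzU i).1 (hij ▸ (hzU j).1)
    rfl

theorem HasDistinctPreimages.of_mem_closure (hf : IsProperMap f)
    (hy : y ∈ closure {w | HasDistinctPreimages f s ι w})
    (hinj : ∀ x ∈ closure s, f x = y → ∃ U ∈ 𝓝 x, InjOn f U) :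
    HasDistinctPreimages f (closure s) ι y := by
  set P : Set (ι → X) := {z | Injective z ∧ (∀ i, z i ∈ s) ∧ ∀ i j, f (z i) = f (z j)}
  have hconst : (fun _ : ι => y) ∈ closure ((fun z i => f (z i)) '' P) := by
    refine closure_mono ?_
      (mem_closure_image (continuous_pi fun _ => continuous_id).continuousAt hy)
    rintro _ ⟨w, ⟨z, hinj, hz⟩, rfl⟩
    refine ⟨z, ⟨hinj, fun i => (hz i).1, fun i j => by rw [(hz i).2, (hz j).2]⟩, ?_⟩
    funext i
    exact (hz i).2
  obtain ⟨L, hLP, hL⟩ :=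
    (IsProperMap.pi_map fun _ : ι => hf).isClosedMap.closure_image_subset _ hconst
  have hLs : ∀ i, L i ∈ closure s := fun i =>
    map_mem_closure (f := fun z : ι → X => z i) (continuous_apply i) hLP fun z hz => hz.2.1 i
  have hfL : ∀ i, f (L i) = y := fun i => congrFun hL i
  refine ⟨L, fun i j hij => ?_, fun i => ⟨hLs i, hfL i⟩⟩
  by_contra hne
  obtain ⟨U, hU, hUinj⟩ := hinj _ (hLs i) (hfL i)
  have hW : {z : ι → X | z i ∈ U ∧ z j ∈ U} ∈ 𝓝 L :=
    inter_mem ((continuous_apply i).continuousAt.preimage_mem_nhds hU)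
      ((continuous_apply j).continuousAt.preimage_mem_nhds (hij ▸ hU))
  obtain ⟨z, ⟨hzi, hzj⟩, hzinj, -, hzf⟩ := mem_closure_iff_nhds.mp hLP _ hW
  exact hne (hzinj (hUinj hzi hzj (hzf i j)))

theorem Complex.exists_injective_pow_eq {k : ℕ} (hk : k ≠ 0) {w : ℂ} (hw : w ≠ 0) :
    ∃ s : Fin k → ℂ, Injective s ∧ ∀ i, s i ^ k = w := by
  obtain ⟨s₀, hs₀⟩ := IsAlgClosed.exists_pow_nat_eq w (Nat.pos_of_ne_zero hk)
  have hs₀ne : s₀ ≠ 0 := by rintro rfl; exact hw (by rw [← hs₀, zero_pow hk])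
  have hζ := Complex.isPrimitiveRoot_exp k hk
  refine ⟨fun i => s₀ * Complex.exp (2 * Real.pi * Complex.I / k) ^ (i : ℕ),
    fun i j hij => ?_, fun i => ?_⟩
  · exact Fin.ext (hζ.pow_inj i.isLt j.isLt (mul_left_cancel₀ hs₀ne hij))
  · rw [mul_pow, ← pow_mul, mul_comm (i : ℕ) k, pow_mul, hζ.pow_eq_one, one_pow, mul_one,
      hs₀]

theorem eventually_hasDistinctPreimages_of_eq_pow {f g : X → ℂ} {k : ℕ}
    (hk : k ≠ 0) (hfg : ∀ x, f x = g x ^ k) {x₀ : X}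
    (hg : 𝓝 0 ≤ map g (𝓝 x₀)) {s : Set X} (hs : s ∈ 𝓝 x₀) :
    ∀ᶠ w in 𝓝 0, w ≠ 0 → HasDistinctPreimages f s (Fin k) w := by
  obtain ⟨r, hr, hball⟩ := Metric.mem_nhds_iff.mp (hg (image_mem_map hs))
  filter_upwards [ball_mem_nhds (0 : ℂ) (pow_pos hr k)] with w hw hw0
  obtain ⟨σ, hσinj, hσ⟩ := Complex.exists_injective_pow_eq hk hw0
  have hσr : ∀ i, σ i ∈ ball (0 : ℂ) r := fun i => by
    rw [mem_ball_zero_iff] at hw ⊢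
    rw [← hσ i, norm_pow] at hw
    exact lt_of_pow_lt_pow_left₀ k hr.le hw
  choose z hzs hgz using fun i => hball (hσr i)
  exact ⟨z, fun i j hij => hσinj (by rw [← hgz i, ← hgz j, hij]),
    fun i => ⟨hzs i, by rw [hfg, hgz, hσ]⟩⟩

theorem Polynomial.add_two_le_natDegree {R : Type*} [CommRing R] [IsDomain R] {p : R[X]}
    (hp : 0 < p.degree) {x w : R} (hx : p.eval x = w) (hx' : (derivative p).eval x = 0) {m : ℕ}
    (h : HasDistinctPreimages p.eval {x}ᶜ (Fin m) w) : m + 2 ≤ p.natDegree := by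
  classical
  obtain ⟨z, hinj, hz⟩ := h
  set q := p - C w
  have hq : q ≠ 0 := fun h0 => by
    have := congrArg degree h0
    rw [degree_sub_C hp, degree_zero] at this
    exact (bot_lt_iff_ne_bot.mp (lt_of_le_of_lt bot_le hp)) this
  have hroot : ∀ y, p.eval y = w → y ∈ q.roots.toFinset := fun y hy => by
    simp [mem_roots hq, q, hy]
  have hsub : insert x (Finset.univ.image z) ⊆ q.roots.toFinset := by
    simp only [Finset.insert_subset_iff, Finset.image_subset_iff, Finset.mem_univ, forall_const]
    exact ⟨hroot x hx, fun i => hroot _ (hz i).2⟩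
  have hcard : (insert x (Finset.univ.image z)).card = m + 1 := by
    rw [Finset.card_insert_of_notMem (by simpa using fun i => (hz i).1),
      Finset.card_image_of_injective _ hinj, Finset.card_univ, Fintype.card_fin]
  have hmult : ¬ q.roots.Nodup := fun hnd => by
    have h2 : 1 < q.rootMultiplicity x :=
      (one_lt_rootMultiplicity_iff_isRoot hq).mpr ⟨by simp [q, hx], by simpa [q] using hx'⟩
    have hcount := Multiset.nodup_iff_count_le_one.mp hnd x
    rw [count_roots] at hcount
    omega
  have hlt : q.roots.toFinset.card < Multiset.card q.roots :=
    lt_of_le_of_ne (Multiset.toFinset_card_le _)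
      (mt Multiset.toFinset_card_eq_card_iff_nodup.mp hmult)
  have hdeg : Multiset.card q.roots ≤ p.natDegree := card_roots_sub_C' hp
  have hsubcard := Finset.card_le_card hsub
  omega

end DistinctPreimages

theorem isOpen_setOf_tendsto_iterate {X : Type*} [MetricSpace X] {f : X → X} (hf : Continuous f)
    {x₀ : X} {K : ℝ≥0} (hK : K < 1)
    (hcontr : ∀ᶠ x in 𝓝 x₀, dist (f x) x₀ ≤ K * dist x x₀) :
    IsOpen {x | Tendsto (fun n => f^[n] x) atTop (𝓝 x₀)} := by
  obtain ⟨r, hr, hball⟩ := Metric.eventually_nhds_iff_ball.mp hcontr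
  have hiter : ∀ x ∈ ball x₀ r, ∀ n, dist (f^[n] x) x₀ ≤ K ^ n * dist x x₀ := by
    intro x hx n
    induction n with
    | zero => simp
    | succ n ih =>
      have hn : f^[n] x ∈ ball x₀ r :=
        lt_of_le_of_lt (ih.trans (mul_le_of_le_one_left dist_nonneg (pow_le_one₀ K.2 hK.le))) hx
      rw [iterate_succ_apply', pow_succ', mul_assoc]
      exact (hball _ hn).trans (mul_le_mul_of_nonneg_left ih K.2)
  have hconv : ∀ x ∈ ball x₀ r, Tendsto (fun n => f^[n] x) atTop (𝓝 x₀) := fun x hx =>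
    tendsto_iff_dist_tendsto_zero.mpr <| squeeze_zero (fun _ => dist_nonneg) (hiter x hx) <| by
      simpa using (tendsto_pow_atTop_nhds_zero_of_lt_one K.2 hK).mul_const (dist x x₀)
  have hunion :
      {x | Tendsto (fun n => f^[n] x) atTop (𝓝 x₀)} = ⋃ n, f^[n] ⁻¹' ball x₀ r := by
    ext x
    simp only [mem_ofPred_eq, mem_iUnion, mem_preimage]
    refine ⟨fun h => (h.eventually (ball_mem_nhds x₀ hr)).exists, fun ⟨n, hn⟩ => ?_⟩
    refine (tendsto_add_atTop_iff_nat n).mp ?_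
    simpa only [iterate_add_apply] using hconv _ hn
  rw [hunion]
  exact isOpen_iUnion fun n => (hf.iterate n).isOpen_preimage _ isOpen_ball

theorem IsOpen.inter_closure_connectedComponentIn_subset {X : Type*} [TopologicalSpace X]
    [LocallyConnectedSpace X] {U : Set X} (hU : IsOpen U) (x : X) :
    U ∩ closure (connectedComponentIn U x) ⊆ connectedComponentIn U x := by
  rintro y ⟨hyU, hy⟩
  obtain ⟨z, hzy, hzx⟩ := mem_closure_iff.mp hy _ hU.connectedComponentIn
    (mem_connectedComponentIn hyU)
  rw [connectedComponentIn_eq hzx, ← connectedComponentIn_eq hzy]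
  exact mem_connectedComponentIn hyU

theorem HasStrictDerivAt.exists_mem_nhds_injOn {𝕜 : Type*} [NontriviallyNormedField 𝕜]
    [CompleteSpace 𝕜] {f : 𝕜 → 𝕜} {f' x : 𝕜} (hf : HasStrictDerivAt f f' x)
    (hf' : f' ≠ 0) : ∃ U ∈ 𝓝 x, InjOn f U :=
  ⟨_, hf.eventually_left_inverse hf', fun _ hy _ hz h => hy.symm.trans (h ▸ hz)⟩

variable {d : ℕ} {a : ℂ}

noncomputable def fpolyPolynomial (d : ℕ) (a : ℂ) : ℂ[X] :=
  X ^ (d - 1) * (X + C ((d : ℂ) * a / ((d : ℂ) - 1)))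

theorem eval_fpolyPolynomial : (fpolyPolynomial d a).eval = fpoly d a := by
  ext z
  simp [fpolyPolynomial, fpoly]

theorem natDegree_fpolyPolynomial : (fpolyPolynomial d a).natDegree = d - 1 + 1 := by
  rw [fpolyPolynomial, natDegree_mul (pow_ne_zero _ X_ne_zero) (X_add_C_ne_zero _),
    natDegree_X_pow, natDegree_X_add_C]

theorem degree_fpolyPolynomial_pos : 0 < (fpolyPolynomial d a).degree :=
  natDegree_pos_iff_degree_pos.mp (by rw [natDegree_fpolyPolynomial]; omega)

theorem eval_derivative_fpolyPolynomial (hd : 2 ≤ d) (z : ℂ) :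
    (derivative (fpolyPolynomial d a)).eval z = d * z ^ (d - 2) * (z + a) := by
  obtain ⟨k, rfl⟩ : ∃ k, d = k + 2 := ⟨d - 2, by omega⟩
  have hk0 : (k : ℂ) + 1 ≠ 0 := by exact_mod_cast k.succ_ne_zero
  simp only [fpolyPolynomial, derivative_mul, derivative_X_pow, derivative_add, derivative_X,
    derivative_C, eval_add, eval_mul, eval_pow, eval_X, eval_C, eval_one, eval_zero]
  push_cast
  rw [show (k : ℂ) + 2 - 1 = k + 1 by ring]
  field_simp
  ring

theorem hasStrictDerivAt_fpoly (hd : 2 ≤ d) (z : ℂ) :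
    HasStrictDerivAt (fpoly d a) (d * z ^ (d - 2) * (z + a)) z := by
  rw [← eval_fpolyPolynomial, ← eval_derivative_fpolyPolynomial hd]
  exact Polynomial.hasStrictDerivAt _ z

theorem fpoly_deriv_ne_zero (hd : 1 ≤ d) {z : ℂ} (hz : z ≠ 0) (hza : z ≠ -a) :
    (d : ℂ) * z ^ (d - 2) * (z + a) ≠ 0 :=
  mul_ne_zero (mul_ne_zero (by exact_mod_cast (by omega : d ≠ 0)) (pow_ne_zero _ hz))
    (fun h => hza (eq_neg_of_add_eq_zero_left h))

theorem isProperMap_fpoly : IsProperMap (fpoly d a) :=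
  eval_fpolyPolynomial (d := d) (a := a) ▸ isProperMap_eval _ degree_fpolyPolynomial_pos

theorem fpoly_zero (hd : 2 ≤ d) : fpoly d a 0 = 0 := by
  simp [fpoly, zero_pow (by omega : d - 1 ≠ 0)]

theorem fpoly_neg_ne_zero (hd : 2 ≤ d) (ha : a ≠ 0) : fpoly d a (-a) ≠ 0 := by
  have hd1 : (d : ℂ) - 1 ≠ 0 := by rw [sub_ne_zero]; exact_mod_cast (by omega : d ≠ 1)
  refine mul_ne_zero (pow_ne_zero _ (neg_ne_zero.mpr ha)) ?_
  rw [show -a + d * a / (d - 1) = a / (d - 1) by field_simp; ring]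
  exact div_ne_zero ha hd1

theorem exists_fpoly_eq_pow (hd : 2 ≤ d) (ha : a ≠ 0) :
    ∃ g : ℂ → ℂ, 𝓝 0 ≤ map g (𝓝 0) ∧ ∀ z, fpoly d a z = g z ^ (d - 1) := by
  set c : ℂ := d * a / (d - 1)
  have hc : c ≠ 0 := div_ne_zero (mul_ne_zero (by exact_mod_cast (by omega : d ≠ 0)) ha)
    (by rw [sub_ne_zero]; exact_mod_cast (by omega : d ≠ 1))
  have hk : d - 1 ≠ 0 := by omega
  obtain ⟨μ, hμ⟩ := IsAlgClosed.exists_pow_nat_eq c (Nat.pos_of_ne_zero hk)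
  have hμ0 : μ ≠ 0 := by rintro rfl; exact hc (by rw [← hμ, zero_pow hk])
  set g : ℂ → ℂ := fun z => z * (μ * (1 + z / c) ^ (((d - 1 : ℕ) : ℂ)⁻¹))
  have hg : HasStrictDerivAt g μ 0 := by
    have hroot := (((hasStrictDerivAt_id (0 : ℂ)).div_const c).const_add 1).cpow_const
      (c := ((d - 1 : ℕ) : ℂ)⁻¹) (by simp)
    refine ((hasStrictDerivAt_id 0).mul (hroot.const_mul μ)).congr_deriv ?_
    simp
  refine ⟨g, by simpa [g] using (hg.map_nhds_eq hμ0).ge, fun z => ?_⟩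
  rw [mul_pow, mul_pow, Complex.cpow_nat_inv_pow _ hk, hμ, fpoly]
  field_simp
  ring

theorem fpoly_preimage_basin : fpoly d a ⁻¹' basin d a = basin d a := by
  ext z
  exact tendsto_add_atTop_iff_nat (f := fun n => (fpoly d a)^[n] z) 1

theorem immBasin_subset_basin : immBasin d a ⊆ basin d a :=
  connectedComponentIn_subset _ _

theorem zero_mem_basin (hd : 2 ≤ d) : (0 : ℂ) ∈ basin d a :=
  tendsto_const_nhds.congr fun n => (iterate_fixed (fpoly_zero hd) n).symm

theorem isOpen_basin (hd : 3 ≤ d) : IsOpen (basin d a) := by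
  have hderiv : HasDerivAt (fpoly d a) 0 0 := by
    simpa [zero_pow (by omega : d - 2 ≠ 0)] using
      (hasStrictDerivAt_fpoly (d := d) (a := a) (by omega) 0).hasDerivAt
  have hcontr : ∀ᶠ z in 𝓝 0, dist (fpoly d a z) 0 ≤ (2⁻¹ : ℝ≥0) * dist z 0 := by
    simpa [fpoly_zero (by omega : 2 ≤ d)] using
      (hasDerivAt_iff_isLittleO.mp hderiv).def (by norm_num : (0 : ℝ) < 2⁻¹)
  exact isOpen_setOf_tendsto_iterate isProperMap_fpoly.continuous (by norm_num) hcontr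

theorem isOpen_immBasin (hd : 3 ≤ d) : IsOpen (immBasin d a) :=
  (isOpen_basin hd).connectedComponentIn

theorem zero_mem_immBasin (hd : 3 ≤ d) : (0 : ℂ) ∈ immBasin d a :=
  mem_connectedComponentIn (zero_mem_basin (by omega))

theorem hasDistinctPreimages_of_mem_immBasin (hd : 3 ≤ d) (ha : a ≠ 0)
    (hna : -a ∉ immBasin d a) (hna_basin : -a ∈ basin d a) {w : ℂ} (hw : w ∈ immBasin d a)
    (hw0 : w ≠ 0) :
    HasDistinctPreimages (fpoly d a) (immBasin d a) (Fin (d - 1)) w := by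
  set V := immBasin d a
  set B := {w | w ≠ 0 → HasDistinctPreimages (fpoly d a) V (Fin (d - 1)) w}
  have hbasin := (isOpen_basin (a := a) hd).inter_closure_connectedComponentIn_subset 0
  have hcrit : -a ∉ closure V := fun h => hna (hbasin ⟨hna_basin, h⟩)
  have hB : IsOpen B := by
    refine isOpen_iff_mem_nhds.mpr fun w' hw' => ?_
    by_cases hw'0 : w' = 0
    · obtain ⟨g, hg, hfg⟩ := exists_fpoly_eq_pow (d := d) (by omega) ha
      exact hw'0 ▸ eventually_hasDistinctPreimages_of_eq_pow (k := d - 1) (by omega) hfg hg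
        ((isOpen_immBasin hd).mem_nhds (zero_mem_immBasin hd))
    refine ((hw' hw'0).eventually (isOpen_immBasin hd) fun x hx hfx => ?_).mono fun _ h _ => h
    have hx0 : x ≠ 0 := by rintro rfl; exact hw'0 (hfx.symm.trans (fpoly_zero (by omega)))
    rw [← hfx, ((hasStrictDerivAt_fpoly (by omega) x).map_nhds_eq
      (fpoly_deriv_ne_zero (by omega) hx0 fun h => hna (h ▸ hx)))]
  have hBclosed : closure B ∩ V ⊆ B := by
    rintro w' ⟨hw'B, hw'V⟩ hw'0
    have hw'G : w' ∈ closure {w | HasDistinctPreimages (fpoly d a) V (Fin (d - 1)) w} :=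
      closure_mono (fun v hv => hv.2 hv.1) (isOpen_compl_singleton.inter_closure ⟨hw'0, hw'B⟩)
    refine (HasDistinctPreimages.of_mem_closure isProperMap_fpoly hw'G fun x hx hfx => ?_).mono ?_
    · have hx0 : x ≠ 0 := by rintro rfl; exact hw'0 (hfx.symm.trans (fpoly_zero (by omega)))
      exact (hasStrictDerivAt_fpoly (by omega) x).exists_mem_nhds_injOn
        (fpoly_deriv_ne_zero (by omega) hx0 fun h => hcrit (h ▸ hx))
    · rintro x ⟨hx, hfx⟩
      refine hbasin ⟨?_, hx⟩
      rw [← fpoly_preimage_basin, mem_preimage, mem_singleton_iff.mp hfx]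
      exact immBasin_subset_basin hw'V
  exact isPreconnected_connectedComponentIn.subset_of_closure_inter_subset hB
    ⟨0, zero_mem_immBasin hd, fun h => absurd rfl h⟩ hBclosed hw hw0

/-- If the critical value `f_a(-a)` lies in the immediate basin `B_a` of `0`,
then so does the critical point `-a`. -/
theorem stmt8 (d : ℕ) (hd : 3 ≤ d) (a : ℂ) (h : fpoly d a (-a) ∈ immBasin d a) :
    -a ∈ immBasin d a := by
  by_cases ha : a = 0
  · simpa [ha] using zero_mem_immBasin (a := a) hd
  by_contra hna
  have hna_basin : -a ∈ basin d a := fpoly_preimage_basin.subset (immBasin_subset_basin h)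
  have hpre := hasDistinctPreimages_of_mem_immBasin hd ha hna hna_basin h
    (fpoly_neg_ne_zero (by omega) ha)
  rw [← eval_fpolyPolynomial] at hpre
  have hmult := (fpolyPolynomial d a).add_two_le_natDegree degree_fpolyPolynomial_pos rfl
    (by rw [eval_derivative_fpolyPolynomial (by omega)]; simp)
    (hpre.mono fun x hx (hxa : x = -a) => hna (hxa ▸ hx.1))
  rw [natDegree_fpolyPolynomial] at hmult
  omega
end

section
/- For a ∈ ℝ with a > 0 small enough, the critical point -a lies in the immediate basin B_a of 0; i.e. the positive real axis near 0 is contained in the central component ℋ_0 = {a : -a ∈ B_a}. -/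
/-! For `|z| ≤ |a| ≤ 1/2` and `d ≥ 3` one has `|f_a(z)| ≤ |z|^(d-1) (|z| + 2|a|) ≤ 3|a|² |z| ≤ (3/4) |z|`,
so `f_a` contracts the closed disc of radius `|a|` towards `0`. This disc is convex, lies in the
basin and contains both `0` and the critical point `-a`, hence `-a` lies in the immediate basin. -/

open Filter Topology Metric

section Contraction

variable {E : Type*} [SeminormedAddCommGroup E] {f : E → E} {r c : ℝ}

theorem norm_iterate_le_pow_mul (hc0 : 0 ≤ c) (hc1 : c ≤ 1)
    (hf : ∀ z, ‖z‖ ≤ r → ‖f z‖ ≤ c * ‖z‖) {z : E} (hz : ‖z‖ ≤ r) (n : ℕ) :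
    ‖f^[n] z‖ ≤ c ^ n * ‖z‖ := by
  induction n with
  | zero => simp
  | succ n ih =>
    have hmem : ‖f^[n] z‖ ≤ r :=
      ih.trans (hz.trans' (mul_le_of_le_one_left (norm_nonneg z) (pow_le_one₀ hc0 hc1)))
    rw [Function.iterate_succ_apply', pow_succ', mul_assoc]
    exact (hf _ hmem).trans (mul_le_mul_of_nonneg_left ih hc0)

theorem tendsto_iterate_zero_of_norm_le_mul (hc0 : 0 ≤ c) (hc1 : c < 1)
    (hf : ∀ z, ‖z‖ ≤ r → ‖f z‖ ≤ c * ‖z‖) {z : E} (hz : ‖z‖ ≤ r) :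
    Tendsto (fun n ↦ f^[n] z) atTop (𝓝 0) := by
  rw [tendsto_zero_iff_norm_tendsto_zero]
  refine squeeze_zero (fun _ ↦ norm_nonneg _)
    (norm_iterate_le_pow_mul hc0 hc1.le hf hz) ?_
  simpa using (tendsto_pow_atTop_nhds_zero_of_lt_one hc0 hc1).mul_const ‖z‖

end Contraction

theorem norm_fpoly_le {d : ℕ} (hd : 2 ≤ d) (a z : ℂ) :
    ‖fpoly d a z‖ ≤ ‖z‖ ^ (d - 1) * (‖z‖ + 2 * ‖a‖) := by
  have hd' : (2 : ℝ) ≤ d := by exact_mod_cast hd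
  have hcoef : ‖(d : ℂ) * a / ((d : ℂ) - 1)‖ ≤ 2 * ‖a‖ := by
    have : (d : ℂ) - 1 = ((d - 1 : ℝ) : ℂ) := by push_cast; ring
    rw [this, norm_div, norm_mul, Complex.norm_natCast, Complex.norm_real, Real.norm_eq_abs,
      abs_of_pos (by linarith), div_le_iff₀ (by linarith)]
    nlinarith [norm_nonneg a]
  rw [fpoly, norm_mul, norm_pow]
  gcongr
  exact (norm_add_le _ _).trans (by gcongr)

theorem norm_fpoly_le_mul {d : ℕ} (hd : 3 ≤ d) (a : ℂ) {r : ℝ} (hr : r ≤ 1) {z : ℂ}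
    (hz : ‖z‖ ≤ r) : ‖fpoly d a z‖ ≤ r * (r + 2 * ‖a‖) * ‖z‖ := by
  have hr0 : 0 ≤ r := (norm_nonneg z).trans hz
  have hpow : ‖z‖ ^ (d - 1) ≤ r * ‖z‖ := by
    rw [show d - 1 = d - 2 + 1 by omega, pow_succ]
    gcongr
    exact (pow_le_pow_left₀ (norm_nonneg z) hz _).trans (pow_le_of_le_one hr0 hr (by omega))
  calc ‖fpoly d a z‖ ≤ ‖z‖ ^ (d - 1) * (‖z‖ + 2 * ‖a‖) := norm_fpoly_le (by omega) a z
    _ ≤ r * ‖z‖ * (r + 2 * ‖a‖) := by gcongr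
    _ = r * (r + 2 * ‖a‖) * ‖z‖ := by ring

theorem closedBall_subset_basin {d : ℕ} (hd : 3 ≤ d) {a : ℂ} (ha : ‖a‖ ≤ 1 / 2) :
    closedBall 0 ‖a‖ ⊆ basin d a := by
  intro z hz
  rw [mem_closedBall_zero_iff] at hz
  have hc : ‖a‖ * (‖a‖ + 2 * ‖a‖) < 1 := by nlinarith [norm_nonneg a]
  exact tendsto_iterate_zero_of_norm_le_mul (by positivity) hc
    (fun w hw ↦ norm_fpoly_le_mul hd a (by linarith) hw) hz

theorem neg_mem_immBasin {d : ℕ} (hd : 3 ≤ d) {a : ℂ} (ha : ‖a‖ ≤ 1 / 2) :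
    -a ∈ immBasin d a :=
  (convex_closedBall (0 : ℂ) ‖a‖).isPreconnected.subset_connectedComponentIn
    (mem_closedBall_self (norm_nonneg a)) (closedBall_subset_basin hd ha)
    (by simp)

/-- For small real `a > 0`, the critical point `-a` lies in the immediate basin of `0`:
the positive real axis near `0` is contained in the central component `ℋ₀`. -/
theorem stmt15 (d : ℕ) (hd : 3 ≤ d) :
    ∃ ε : ℝ, 0 < ε ∧ ∀ a : ℝ, 0 < a → a < ε →
      (-(a : ℂ)) ∈ immBasin d (a : ℂ) :=
  ⟨1 / 2, one_half_pos, fun a ha haε ↦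
    neg_mem_immBasin hd (by rw [Complex.norm_real, Real.norm_of_nonneg ha.le]; exact haε.le)⟩
end
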